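/- Let G be a weighted directed graph on vertex set V = {1,…,n} and let M_8 be the simple out-star motif with vertices {1,2,3} and edge set E_M = {(1,2),(1,3)}. Then the functional motif adjacency matrix of M_8 in G satisfies M^func = (1/2)·(C + Cᵀ + C'), where C = J ∘ (G J_n) + G ∘ (J J_n) and C' = J_n ∘ (Jᵀ G) + J_n ∘ (Gᵀ J). -/

import Mathlib

open scoped Classical BigOperators Matrix

noncomputable section

/-- A motif on `m` vertices: a weakly connected loopless directed graph on the vertex set
`Fin m`, given by its edge set. -/
structure Motif (m : ℕ) where
  edges : Finset (Fin m × Fin m)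
  irrefl : ∀ e ∈ edges, e.1 ≠ e.2
  connected : (SimpleGraph.fromRel (fun u v => (u, v) ∈ edges)).Connected

variable {n m : ℕ}

/-- Edge set of the weighted directed graph with weight matrix `G`:
`E = {(i,j) : i ≠ j and G i j > 0}`. -/
def edgeFinset (G : Matrix (Fin n) (Fin n) ℝ) : Finset (Fin n × Fin n) :=
  Finset.univ.filter fun p => p.1 ≠ p.2 ∧ 0 < G p.1 p.2

/-- Directed-edge indicator matrix `J`. -/
def Jmat (G : Matrix (Fin n) (Fin n) ℝ) : Matrix (Fin n) (Fin n) ℝ :=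
  fun i j => if (i, j) ∈ edgeFinset G then 1 else 0

/-- Single-edge indicator matrix `J_s`. -/
def Jsmat (G : Matrix (Fin n) (Fin n) ℝ) : Matrix (Fin n) (Fin n) ℝ :=
  fun i j => if (i, j) ∈ edgeFinset G ∧ (j, i) ∉ edgeFinset G then 1 else 0

/-- Double-edge indicator matrix `J_d`. -/
def Jdmat (G : Matrix (Fin n) (Fin n) ℝ) : Matrix (Fin n) (Fin n) ℝ :=
  fun i j => if (i, j) ∈ edgeFinset G ∧ (j, i) ∈ edgeFinset G then 1 else 0

/-- Missing-edge indicator matrix `J_0`. -/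
def J0mat (G : Matrix (Fin n) (Fin n) ℝ) : Matrix (Fin n) (Fin n) ℝ :=
  fun i j => if (i, j) ∉ edgeFinset G ∧ (j, i) ∉ edgeFinset G ∧ i ≠ j then 1 else 0

/-- Vertex-distinct indicator matrix `J_n`. -/
def Jnmat (n : ℕ) : Matrix (Fin n) (Fin n) ℝ :=
  fun i j => if i ≠ j then 1 else 0

/-- Single-edge weighted matrix `G_s`. -/
def Gsmat (G : Matrix (Fin n) (Fin n) ℝ) : Matrix (Fin n) (Fin n) ℝ :=
  fun i j => if (i, j) ∈ edgeFinset G ∧ (j, i) ∉ edgeFinset G then G i j else 0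

/-- Double-edge weighted matrix `G_d`. -/
def Gdmat (G : Matrix (Fin n) (Fin n) ℝ) : Matrix (Fin n) (Fin n) ℝ :=
  fun i j => if (i, j) ∈ edgeFinset G ∧ (j, i) ∈ edgeFinset G then G i j + G j i else 0

/-- Entrywise (Hadamard) product of matrices. -/
def had (A B : Matrix (Fin n) (Fin n) ℝ) : Matrix (Fin n) (Fin n) ℝ :=
  fun i j => A i j * B i j

/-- Well-formedness of a candidate subgraph `H = (V_H, E_H)` of a graph on `Fin n`:
each edge joins two distinct vertices of `H`. -/
def IsGraphPair (H : Finset (Fin n) × Finset (Fin n × Fin n)) : Prop :=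
  ∀ e ∈ H.2, e.1 ∈ H.1 ∧ e.2 ∈ H.1 ∧ e.1 ≠ e.2

/-- `φ` is an isomorphism from the motif `M` onto the graph `H = (V_H, E_H)`. -/
def IsIso (M : Motif m) (H : Finset (Fin n) × Finset (Fin n × Fin n))
    (φ : Fin m → Fin n) : Prop :=
  Function.Injective φ ∧ Finset.image φ Finset.univ = H.1 ∧
    ∀ u v : Fin m, (u, v) ∈ M.edges ↔ (φ u, φ v) ∈ H.2

/-- `H` is a functional instance of motif `M` in the graph with weight matrix `G`,
i.e. `M ≅ H ≤ G`. -/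
def IsFuncInstance (M : Motif m) (G : Matrix (Fin n) (Fin n) ℝ)
    (H : Finset (Fin n) × Finset (Fin n × Fin n)) : Prop :=
  IsGraphPair H ∧ H.2 ⊆ edgeFinset G ∧ ∃ φ, IsIso M H φ

/-- `H` is a structural instance of motif `M` in the graph with weight matrix `G`,
i.e. `M ≅ H < G` (`H` an induced subgraph: `E_H = E ∩ (V_H × V_H)`). -/
def IsStrucInstance (M : Motif m) (G : Matrix (Fin n) (Fin n) ℝ)
    (H : Finset (Fin n) × Finset (Fin n × Fin n)) : Prop :=
  IsGraphPair H ∧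
    H.2 = (edgeFinset G).filter (fun e => e.1 ∈ H.1 ∧ e.2 ∈ H.1) ∧
    ∃ φ, IsIso M H φ

/-- `{i, j}` is an anchored pair of the instance `H`: there is an isomorphism `φ` from
`M` to `H` and distinct anchors `a, b ∈ A` with `φ a = i` and `φ b = j`. -/
def AnchoredPair (M : Motif m) (A : Finset (Fin m))
    (H : Finset (Fin n) × Finset (Fin n × Fin n)) (i j : Fin n) : Prop :=
  ∃ φ, IsIso M H φ ∧ ∃ a ∈ A, ∃ b ∈ A, a ≠ b ∧ φ a = i ∧ φ b = j

/-- The functional motif adjacency matrix of the motif `(M, A)` in the graph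
with weight matrix `G`. -/
def mamFunc (M : Motif m) (A : Finset (Fin m)) (G : Matrix (Fin n) (Fin n) ℝ) :
    Matrix (Fin n) (Fin n) ℝ :=
  fun i j => (1 / (M.edges.card : ℝ)) *
    ∑ H : Finset (Fin n) × Finset (Fin n × Fin n),
      if IsFuncInstance M G H ∧ AnchoredPair M A H i j then ∑ e ∈ H.2, G e.1 e.2 else 0

/-- The structural motif adjacency matrix of the motif `(M, A)` in the graph
with weight matrix `G`. -/
def mamStruc (M : Motif m) (A : Finset (Fin m)) (G : Matrix (Fin n) (Fin n) ℝ) :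
    Matrix (Fin n) (Fin n) ℝ :=
  fun i j => (1 / (M.edges.card : ℝ)) *
    ∑ H : Finset (Fin n) × Finset (Fin n × Fin n),
      if IsStrucInstance M G H ∧ AnchoredPair M A H i j then ∑ e ∈ H.2, G e.1 e.2 else 0

/-!
A functional instance of the out-star containing two distinct vertices `i`, `j` is centred at `i`
(with `j` a leaf), at `j`, or at a third vertex `k` with leaves `i` and `j`; in each case it is
determined by its remaining vertex `k`, and its weight is the sum of its two edge weights. Summing
over `k`, the Hadamard factors `J` and `J_n` record that both edges exist and that the two leaves
differ. Since the weights are nonnegative with zero diagonal, `G` vanishes off `E`, so a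
weight needs no indicator of its own edge; this gives the entries of `C`, `Cᵀ` and `C'`, and the
factor `1/2` is `1/|E_M|`.
-/

open Finset

section Motif

variable {M : Motif m} {G : Matrix (Fin n) (Fin n) ℝ}
  {H : Finset (Fin n) × Finset (Fin n × Fin n)} {φ : Fin m → Fin n}

theorem isGraphPair_image (M : Motif m) (hφ : Function.Injective φ) :
    IsGraphPair (univ.image φ, M.edges.image (Prod.map φ φ)) := by
  intro e he
  obtain ⟨⟨u, v⟩, huv, rfl⟩ := mem_image.1 he
  exact ⟨mem_image_of_mem φ (mem_univ u), mem_image_of_mem φ (mem_univ v),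
    hφ.ne (M.irrefl _ huv)⟩

theorem isIso_iff_eq_image (hH : IsGraphPair H) :
    IsIso M H φ ↔
      Function.Injective φ ∧ H = (univ.image φ, M.edges.image (Prod.map φ φ)) := by
  constructor
  · rintro ⟨hφ, himg, hedge⟩
    refine ⟨hφ, Prod.ext himg.symm (Finset.ext fun e => ⟨fun he => ?_, fun he => ?_⟩)⟩
    · obtain ⟨he₁, he₂, -⟩ := hH e he
      rw [← himg] at he₁ he₂
      obtain ⟨u, -, hu⟩ := mem_image.1 he₁
      obtain ⟨v, -, hv⟩ := mem_image.1 he₂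
      refine mem_image.2 ⟨(u, v), (hedge u v).2 ?_, ?_⟩
      · rwa [hu, hv]
      · simp [hu, hv]
    · obtain ⟨⟨u, v⟩, huv, rfl⟩ := mem_image.1 he
      exact (hedge u v).1 huv
  · rintro ⟨hφ, rfl⟩
    exact ⟨hφ, rfl, fun u v => ((hφ.prodMap hφ).mem_finset_image).symm⟩

theorem isFuncInstance_iff :
    IsFuncInstance M G H ↔ ∃ φ : Fin m → Fin n, Function.Injective φ ∧
      M.edges.image (Prod.map φ φ) ⊆ edgeFinset G ∧
      H = (univ.image φ, M.edges.image (Prod.map φ φ)) := by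
  constructor
  · rintro ⟨hH, hsub, φ, hφ⟩
    obtain ⟨hinj, rfl⟩ := (isIso_iff_eq_image hH).1 hφ
    exact ⟨φ, hinj, hsub, rfl⟩
  · rintro ⟨φ, hinj, hsub, rfl⟩
    exact ⟨isGraphPair_image M hinj, hsub, φ, (isIso_iff_eq_image (isGraphPair_image M hinj)).2
      ⟨hinj, rfl⟩⟩

theorem isFuncInstance_and_anchoredPair_univ_iff {i j : Fin n} :
    IsFuncInstance M G H ∧ AnchoredPair M univ H i j ↔
      IsFuncInstance M G H ∧ i ∈ H.1 ∧ j ∈ H.1 ∧ i ≠ j := by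
  refine and_congr_right fun ⟨_, _, ψ, hψ⟩ => ⟨?_, ?_⟩
  · rintro ⟨φ, ⟨hinj, himg, -⟩, a, -, b, -, hab, rfl, rfl⟩
    rw [← himg]
    exact ⟨mem_image_of_mem φ (mem_univ a), mem_image_of_mem φ (mem_univ b), hinj.ne hab⟩
  · rintro ⟨hi, hj, hij⟩
    rw [← hψ.2.1] at hi hj
    obtain ⟨a, -, rfl⟩ := mem_image.1 hi
    obtain ⟨b, -, rfl⟩ := mem_image.1 hj
    exact ⟨ψ, hψ, a, mem_univ a, b, mem_univ b, fun h => hij (congrArg ψ h), rfl, rfl⟩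

end Motif

theorem mem_edgeFinset {G : Matrix (Fin n) (Fin n) ℝ} {p : Fin n × Fin n} :
    p ∈ edgeFinset G ↔ p.1 ≠ p.2 ∧ 0 < G p.1 p.2 := by
  simp [edgeFinset]

theorem eq_zero_of_notMem_edgeFinset {G : Matrix (Fin n) (Fin n) ℝ} (hpos : ∀ i j, 0 ≤ G i j)
    (hdiag : ∀ i, G i i = 0) {i j : Fin n} (h : (i, j) ∉ edgeFinset G) : G i j = 0 := by
  obtain rfl | hij := eq_or_ne i j
  · exact hdiag i
  · exact le_antisymm (not_lt.1 fun hlt => h (mem_edgeFinset.2 ⟨hij, hlt⟩)) (hpos i j)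

def outStar (a b c : Fin n) : Finset (Fin n) × Finset (Fin n × Fin n) :=
  ({a, b, c}, {(a, b), (a, c)})

def IsOutStar (G : Matrix (Fin n) (Fin n) ℝ) (a b c : Fin n) : Prop :=
  (a, b) ∈ edgeFinset G ∧ (a, c) ∈ edgeFinset G ∧ b ≠ c

section OutStar

variable {G : Matrix (Fin n) (Fin n) ℝ} {a b c a' b' c' : Fin n}

theorem IsOutStar.swap (h : IsOutStar G a b c) : IsOutStar G a c b :=
  ⟨h.2.1, h.1, h.2.2.symm⟩

theorem IsOutStar.center_ne_left (h : IsOutStar G a b c) : a ≠ b :=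
  (mem_edgeFinset.1 h.1).1

theorem IsOutStar.center_ne_right (h : IsOutStar G a b c) : a ≠ c :=
  (mem_edgeFinset.1 h.2.1).1

theorem outStar_swap (a b c : Fin n) : outStar a b c = outStar a c b := by
  simp only [outStar, pair_comm]

theorem center_eq_of_outStar_eq (h : outStar a b c = outStar a' b' c') : a = a' := by
  have hab : (a, b) ∈ (outStar a' b' c').2 := h ▸ by simp [outStar]
  simp only [outStar, mem_insert, mem_singleton, Prod.mk.injEq] at hab
  rcases hab with ⟨rfl, -⟩ | ⟨rfl, -⟩ <;> rfl

theorem right_eq_of_outStar_eq (hcb : c ≠ b) (h : outStar a b c = outStar a b c') : c = c' := by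
  have hac : (a, c) ∈ (outStar a b c').2 := h ▸ by simp [outStar]
  simp only [outStar, mem_insert, mem_singleton, Prod.mk.injEq] at hac
  rcases hac with ⟨-, h⟩ | ⟨-, h⟩
  exacts [absurd h hcb, h]

theorem sum_outStar_edges (G : Matrix (Fin n) (Fin n) ℝ) (hbc : b ≠ c) :
    ∑ e ∈ (outStar a b c).2, G e.1 e.2 = G a b + G a c := by
  rw [outStar, sum_pair (by simpa using hbc)]

end OutStar

theorem isFuncInstance_iff_outStar {M : Motif 3} (hM : M.edges = {((0 : Fin 3), 1), (0, 2)})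
    {G : Matrix (Fin n) (Fin n) ℝ} {H : Finset (Fin n) × Finset (Fin n × Fin n)} :
    IsFuncInstance M G H ↔ ∃ a b c, IsOutStar G a b c ∧ H = outStar a b c := by
  have himage (φ : Fin 3 → Fin n) : univ.image φ = {φ 0, φ 1, φ 2} := by
    simp [Fin.univ_image_def, List.ofFn_succ]
  rw [isFuncInstance_iff, hM]
  simp only [image_insert, image_singleton, Prod.map_apply, insert_subset_iff,
    singleton_subset_iff, himage]
  constructor
  · rintro ⟨φ, hφ, ⟨h₁, h₂⟩, rfl⟩
    exact ⟨φ 0, φ 1, φ 2, ⟨h₁, h₂, hφ.ne (by decide)⟩, rfl⟩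
  · rintro ⟨a, b, c, hs, rfl⟩
    refine ⟨![a, b, c], ?_, ⟨hs.1, hs.2.1⟩, rfl⟩
    intro u v huv
    fin_cases u <;> fin_cases v <;>
      simp_all [hs.center_ne_left, hs.center_ne_right, hs.2.2, hs.center_ne_left.symm,
        hs.center_ne_right.symm, hs.2.2.symm]

theorem filter_funcInstance_anchoredPair_eq {M : Motif 3}
    (hM : M.edges = {((0 : Fin 3), 1), (0, 2)}) (G : Matrix (Fin n) (Fin n) ℝ) (i j : Fin n) :
    univ.filter (fun H => IsFuncInstance M G H ∧ AnchoredPair M univ H i j) =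
      ((univ.filter (IsOutStar G i j)).image (outStar i j) ∪
        (univ.filter (IsOutStar G j i)).image (outStar j i)) ∪
        (univ.filter fun k => IsOutStar G k i j).image (outStar · i j) := by
  ext H
  rw [mem_filter, isFuncInstance_and_anchoredPair_univ_iff, isFuncInstance_iff_outStar hM]
  simp only [mem_univ, true_and, mem_union, mem_image, mem_filter]
  constructor
  · rintro ⟨⟨a, b, c, hs, rfl⟩, hi, hj, hij⟩
    simp only [outStar, mem_insert, mem_singleton] at hi hj
    rcases hi with rfl | rfl | rfl <;> rcases hj with rfl | rfl | rfl
    all_goals first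
      | exact absurd rfl hij
      | exact Or.inl (Or.inl ⟨_, hs, rfl⟩)
      | exact Or.inl (Or.inl ⟨_, hs.swap, outStar_swap _ _ _⟩)
      | exact Or.inl (Or.inr ⟨_, hs, rfl⟩)
      | exact Or.inl (Or.inr ⟨_, hs.swap, outStar_swap _ _ _⟩)
      | exact Or.inr ⟨_, hs, rfl⟩
      | exact Or.inr ⟨_, hs.swap, outStar_swap _ _ _⟩
  · rintro ((⟨k, hs, rfl⟩ | ⟨k, hs, rfl⟩) | ⟨k, hs, rfl⟩)
    · exact ⟨⟨_, _, _, hs, rfl⟩, by simp [outStar], by simp [outStar], hs.center_ne_left⟩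
    · exact ⟨⟨_, _, _, hs, rfl⟩, by simp [outStar], by simp [outStar], hs.center_ne_left.symm⟩
    · exact ⟨⟨_, _, _, hs, rfl⟩, by simp [outStar], by simp [outStar], hs.2.2⟩

theorem sum_funcInstance_anchoredPair_eq {M : Motif 3}
    (hM : M.edges = {((0 : Fin 3), 1), (0, 2)}) (G : Matrix (Fin n) (Fin n) ℝ) (i j : Fin n)
    (w : Finset (Fin n) × Finset (Fin n × Fin n) → ℝ) :
    ∑ H, (if IsFuncInstance M G H ∧ AnchoredPair M univ H i j then w H else 0) =
      (∑ k, if IsOutStar G i j k then w (outStar i j k) else 0) +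
      (∑ k, if IsOutStar G j i k then w (outStar j i k) else 0) +
      ∑ k, if IsOutStar G k i j then w (outStar k i j) else 0 := by
  set S₁ := univ.filter (IsOutStar G i j)
  set S₂ := univ.filter (IsOutStar G j i)
  set S₃ := univ.filter fun k => IsOutStar G k i j
  have h₁₂ : Disjoint (S₁.image (outStar i j)) (S₂.image (outStar j i)) := by
    simp only [disjoint_left, mem_image, S₁, S₂, mem_filter, mem_univ, true_and]
    rintro _ ⟨k, hk, rfl⟩ ⟨k', -, h⟩
    exact hk.center_ne_left (center_eq_of_outStar_eq h).symm
  have h₁₂₃ : Disjoint (S₁.image (outStar i j) ∪ S₂.image (outStar j i))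
      (S₃.image (outStar · i j)) := by
    simp only [disjoint_left, mem_union, mem_image, S₁, S₂, S₃, mem_filter, mem_univ, true_and]
    rintro _ (⟨k, -, rfl⟩ | ⟨k, -, rfl⟩) ⟨k', hk', h⟩
    · exact hk'.center_ne_left (center_eq_of_outStar_eq h)
    · exact hk'.center_ne_right (center_eq_of_outStar_eq h)
  have hinj₁ : Set.InjOn (outStar i j) S₁ := fun k hk k' _ h =>
    right_eq_of_outStar_eq (mem_filter.1 hk).2.2.2.symm h
  have hinj₂ : Set.InjOn (outStar j i) S₂ := fun k hk k' _ h =>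
    right_eq_of_outStar_eq (mem_filter.1 hk).2.2.2.symm h
  have hinj₃ : Set.InjOn (outStar · i j) S₃ := fun k _ k' _ h => center_eq_of_outStar_eq h
  rw [← sum_filter, filter_funcInstance_anchoredPair_eq hM, sum_union h₁₂₃, sum_union h₁₂, sum_image hinj₁, sum_image hinj₂,
    sum_image hinj₃, sum_filter, sum_filter, sum_filter]

section Entries

variable {G : Matrix (Fin n) (Fin n) ℝ} (hpos : ∀ i j, 0 ≤ G i j) (hdiag : ∀ i, G i i = 0)
include hpos hdiag

theorem ite_isOutStar_centered_eq (i j k : Fin n) :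
    (if IsOutStar G i j k then ∑ e ∈ (outStar i j k).2, G e.1 e.2 else 0) =
      Jmat G i j * (G i k * Jnmat n k j) + G i j * (Jmat G i k * Jnmat n k j) := by
  by_cases hij : (i, j) ∈ edgeFinset G
  · by_cases hik : (i, k) ∈ edgeFinset G
    · obtain rfl | hkj := eq_or_ne k j
      · simp [IsOutStar, Jnmat]
      · rw [if_pos ⟨hij, hik, hkj.symm⟩, sum_outStar_edges G hkj.symm]
        simp [Jmat, Jnmat, hij, hik, hkj, add_comm]
    · simp [IsOutStar, Jmat, hik, eq_zero_of_notMem_edgeFinset hpos hdiag hik]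
  · simp [IsOutStar, Jmat, hij, eq_zero_of_notMem_edgeFinset hpos hdiag hij]

theorem ite_isOutStar_leaves_eq {i j : Fin n} (k : Fin n) :
    (if IsOutStar G k i j then ∑ e ∈ (outStar k i j).2, G e.1 e.2 else 0) =
      Jnmat n i j * (Jmat G k i * G k j) + Jnmat n i j * (G k i * Jmat G k j) := by
  by_cases hki : (k, i) ∈ edgeFinset G
  · by_cases hkj : (k, j) ∈ edgeFinset G
    · obtain rfl | hij := eq_or_ne i j
      · simp [IsOutStar, Jnmat]
      · rw [if_pos ⟨hki, hkj, hij⟩, sum_outStar_edges G hij]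
        simp [Jmat, Jnmat, hki, hkj, hij, add_comm]
    · simp [IsOutStar, Jmat, hkj, eq_zero_of_notMem_edgeFinset hpos hdiag hkj]
  · simp [IsOutStar, Jmat, hki, eq_zero_of_notMem_edgeFinset hpos hdiag hki]

theorem sum_ite_isOutStar_centered (i j : Fin n) :
    ∑ k, (if IsOutStar G i j k then ∑ e ∈ (outStar i j k).2, G e.1 e.2 else 0) =
      had (Jmat G) (G * Jnmat n) i j + had G (Jmat G * Jnmat n) i j := by
  simp only [had, Matrix.mul_apply, mul_sum, ← sum_add_distrib]
  exact sum_congr rfl fun k _ => ite_isOutStar_centered_eq hpos hdiag i j k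

theorem sum_ite_isOutStar_leaves (i j : Fin n) :
    ∑ k, (if IsOutStar G k i j then ∑ e ∈ (outStar k i j).2, G e.1 e.2 else 0) =
      had (Jnmat n) ((Jmat G)ᵀ * G) i j + had (Jnmat n) (Gᵀ * Jmat G) i j := by
  simp only [had, Matrix.mul_apply, Matrix.transpose_apply, mul_sum, ← sum_add_distrib]
  exact sum_congr rfl fun k _ => ite_isOutStar_leaves_eq hpos hdiag k

end Entries

/-- **Functional MAM formula for the out-star motif `M₈`.** -/
theorem mam_M8_func
    (G : Matrix (Fin n) (Fin n) ℝ)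
    (hpos : ∀ i j, 0 ≤ G i j) (hdiag : ∀ i, G i i = 0)
    (M8 : Motif 3) (hM : M8.edges = {((0 : Fin 3), 1), (0, 2)}) :
    mamFunc M8 Finset.univ G =
      (1 / 2 : ℝ) •
        (had (Jmat G) (G * Jnmat n) + had G (Jmat G * Jnmat n) +
          (had (Jmat G) (G * Jnmat n) + had G (Jmat G * Jnmat n))ᵀ +
          (had (Jnmat n) ((Jmat G)ᵀ * G) + had (Jnmat n) (Gᵀ * Jmat G))) := by
  have hcard : (M8.edges.card : ℝ) = 2 := by rw [hM]; rfl
  ext i j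
  rw [mamFunc, hcard, sum_funcInstance_anchoredPair_eq hM, sum_ite_isOutStar_leaves hpos hdiag,
    sum_ite_isOutStar_centered hpos hdiag, sum_ite_isOutStar_centered hpos hdiag]
  simp only [Matrix.smul_apply, Matrix.add_apply, Matrix.transpose_apply, smul_eq_mul]
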